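/- Let L ∈ SL(d,ℤ) be irreducible (characteristic polynomial irreducible over ℚ) and let V ⊂ ℝ^d be a nonzero L-invariant real subspace. Then the image of V under the projection ℝ^d → 𝕋^d = ℝ^d/ℤ^d is dense in 𝕋^d. -/

import Mathlib

/-!
Let `H` be the closure of `V + ℤ^d` in `ℝ^d` and `W = H.lineal ⊇ V` the largest subspace
contained in `H`; both are `L`-invariant. Projecting along `W` onto a complement `U`, the image of
`ℤ^d` lies in the closed subgroup `H ∩ U`, which contains no line and is therefore discrete. It is
thus a lattice of rank `dim U < d`, and an integer relation among the images of the standard basis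
vectors yields a nonzero integer vector in `W`. The rational vectors of `W` then form a nonzero
`L`-invariant subspace of `ℚ^d`, which is all of `ℚ^d` because the characteristic polynomial of
`L` is irreducible. Hence `W = ℝ^d`, so `V + ℤ^d` is dense, which is the density of the image of
`V` in the torus.
-/

open Filter Topology Polynomial Matrix

namespace AddSubgroup

variable {E : Type*} [NormedAddCommGroup E] [NormedSpace ℝ E]

/-- `⌊t / ‖x‖⌋ • x ∈ G` approximates `t • (‖x‖⁻¹ • x)` to within `‖x‖`. -/
theorem smul_mem_of_tendsto_normalize {G : AddSubgroup E} (hG : IsClosed (G : Set E))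
    {l : Filter E} [l.NeBot] (hlG : ∀ᶠ x in l, x ∈ G) (hl : l ≤ 𝓝 0) {a : E}
    (ha : Tendsto (fun x => ‖x‖⁻¹ • x) l (𝓝 a)) (t : ℝ) : t • a ∈ G := by
  have herr : Tendsto (fun x : E => (⌊t / ‖x‖⌋ : ℝ) • x - (t / ‖x‖) • x) l (𝓝 0) := by
    refine squeeze_zero_norm (fun x => ?_) (tendsto_norm_zero.comp hl)
    rw [← sub_smul, norm_smul, Real.norm_eq_abs, abs_sub_comm, Int.self_sub_floor,
      abs_of_nonneg (Int.fract_nonneg _)]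
    exact mul_le_of_le_one_left (norm_nonneg x) (Int.fract_lt_one _).le
  have hlim : Tendsto (fun x : E => ⌊t / ‖x‖⌋ • x) l (𝓝 (t • a)) := by
    have := (ha.const_smul t).add herr
    simp only [smul_smul, ← div_eq_mul_inv, add_sub_cancel, add_zero] at this
    simpa only [Int.cast_smul_eq_zsmul] using this
  exact hG.mem_of_tendsto hlim (hlG.mono fun x hx => zsmul_mem hx _)

theorem discreteTopology_of_forall_smul_mem [FiniteDimensional ℝ E] {G : AddSubgroup E}
    (hG : IsClosed (G : Set E)) (h : ∀ x, (∀ t : ℝ, t • x ∈ G) → x = 0) :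
    DiscreteTopology G := by
  rw [discreteTopology_iff_isOpen_singleton_zero, isOpen_singleton_iff_punctured_nhds,
    nhds_ne_subtype_eq_bot_iff]
  by_contra hne
  have : (𝓝[≠] (0 : E) ⊓ 𝓟 G).NeBot := ⟨by simpa using hne⟩
  let 𝒰 := Ultrafilter.of (𝓝[≠] (0 : E) ⊓ 𝓟 G)
  have h𝒰 : (𝒰 : Filter E) ≤ 𝓝[≠] 0 ⊓ 𝓟 G := Ultrafilter.of_le _
  have hsphere : ↑(𝒰.map fun x => ‖x‖⁻¹ • x) ≤ 𝓟 (Metric.sphere (0 : E) 1) := by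
    refine le_principal_iff.2 (Ultrafilter.mem_map.2 ?_)
    filter_upwards [h𝒰 (inter_mem_inf self_mem_nhdsWithin (mem_principal_self _))]
      with x hx
    simp [norm_smul, inv_mul_cancel₀ (norm_ne_zero_iff.2 hx.1)]
  obtain ⟨a, ha, hlim⟩ := (isCompact_sphere (0 : E) 1).ultrafilter_le_nhds _ hsphere
  refine ne_zero_of_mem_sphere (by norm_num) ⟨a, ha⟩ (h a fun t => ?_)
  exact smul_mem_of_tendsto_normalize hG (le_principal_iff.1 (h𝒰.trans inf_le_right))
    (h𝒰.trans (inf_le_left.trans nhdsWithin_le_nhds)) hlim t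

def lineal (H : AddSubgroup E) : Submodule ℝ E where
  carrier := {x | ∀ t : ℝ, t • x ∈ H}
  add_mem' hx hy t := by simpa only [smul_add] using H.add_mem (hx t) (hy t)
  zero_mem' t := by simpa only [smul_zero] using H.zero_mem
  smul_mem' c x hx t := by simpa only [smul_smul] using hx (t * c)

theorem mem_of_mem_lineal {H : AddSubgroup E} {x : E} (hx : x ∈ H.lineal) : x ∈ H := by
  simpa using hx 1

theorem lineal_mapsTo {H : AddSubgroup E} {f : E →ₗ[ℝ] E} (hf : ∀ x ∈ H, f x ∈ H) :
    ∀ x ∈ H.lineal, f x ∈ H.lineal := fun x hx t => by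
  simpa only [map_smul] using hf _ (hx t)

theorem discreteTopology_comap_subtype_of_isCompl_lineal [FiniteDimensional ℝ E]
    {H : AddSubgroup E} (hH : IsClosed (H : Set E)) {U : Submodule ℝ E}
    (hWU : IsCompl H.lineal U) : DiscreteTopology (H.comap U.subtype.toAddMonoidHom) := by
  refine discreteTopology_of_forall_smul_mem (hH.preimage continuous_subtype_val) fun u hu => ?_
  have : (u : E) ∈ H.lineal ⊓ U := ⟨fun t => hu t, u.2⟩
  simpa [hWU.inf_eq_bot] using this

theorem exists_intCombination_mem_lineal [FiniteDimensional ℝ E] {ι : Type*} [Fintype ι]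
    {b : ι → E} (hb : Submodule.span ℝ (Set.range b) = ⊤) {H : AddSubgroup E}
    (hH : IsClosed (H : Set E)) (hbH : ∀ i, b i ∈ H) (hH0 : H.lineal ≠ ⊥) :
    ∃ c : ι → ℤ, c ≠ 0 ∧ ∑ i, c i • b i ∈ H.lineal := by
  obtain ⟨U, hWU⟩ := Submodule.exists_isCompl H.lineal
  set p := U.projectionOnto H.lineal hWU.symm
  have hpH : ∀ x ∈ H, (p x : E) ∈ H := fun x hx => by
    have : (p x : E) - x ∈ H.lineal := by
      rw [← Submodule.projectionOnto_apply_eq_zero_iff hWU.symm, map_sub,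
        Submodule.coe_projectionOnto_apply, Submodule.projectionOnto_projection, sub_self]
    simpa using H.add_mem (mem_of_mem_lineal this) hx
  let Λ : Submodule ℤ U := Submodule.span ℤ (Set.range (p ∘ b))
  have hΛH : Λ ≤ (H.comap U.subtype.toAddMonoidHom).toIntSubmodule :=
    Submodule.span_le.2 (by rintro _ ⟨i, rfl⟩; exact hpH _ (hbH i))
  have : DiscreteTopology Λ :=
    (discreteTopology_comap_subtype_of_isCompl_lineal hH hWU).of_subset hΛH
  have : IsZLattice ℝ Λ := ⟨by
    rw [Submodule.span_span_of_tower, Set.range_comp, ← Submodule.map_span, hb, Submodule.map_top,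
      Submodule.range_projectionOnto]⟩
  have hrank : Module.finrank ℝ U < Fintype.card ι := by
    have h1 := Submodule.finrank_add_eq_of_isCompl hWU
    have h2 : Module.finrank ℝ H.lineal ≠ 0 := mt Submodule.finrank_eq_zero.1 hH0
    have h3 := finrank_range_le_card (R := ℝ) b
    rw [Set.finrank, hb, finrank_top] at h3
    omega
  have hdep : ¬ LinearIndependent ℤ fun i => (⟨p (b i), Submodule.subset_span ⟨i, rfl⟩⟩ : Λ) := by
    intro hli
    have := hli.fintype_card_le_finrank
    rw [ZLattice.rank ℝ Λ] at this
    omega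
  obtain ⟨c, hc, i, hi⟩ := Fintype.not_linearIndependent_iff.1 hdep
  refine ⟨c, fun h => hi (congrFun h i), ?_⟩
  rw [← Submodule.projectionOnto_apply_eq_zero_iff hWU.symm, map_sum]
  simpa [map_zsmul] using congrArg (fun x : Λ => (x : U)) hc

end AddSubgroup

namespace Matrix

variable {K n : Type*} [Field K] [Fintype n] [DecidableEq n]

theorem aeval_mulVec_mem {A : Matrix n n K} {T : Submodule K (n → K)}
    (hT : ∀ v ∈ T, A *ᵥ v ∈ T) (p : K[X]) {x : n → K} (hx : x ∈ T) : aeval A p *ᵥ x ∈ T := by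
  induction p using Polynomial.induction_on with
  | C a => simpa [Algebra.algebraMap_eq_smul_one, smul_mulVec] using T.smul_mem a hx
  | add p q hp hq => simpa [add_mulVec] using T.add_mem hp hq
  | monomial k a ih =>
    rw [pow_succ', mul_left_comm, map_mul, aeval_X, ← mulVec_mulVec]
    exact hT _ ih

theorem charpoly_dvd_of_aeval_mulVec_eq_zero {A : Matrix n n K} (hA : Irreducible A.charpoly)
    {x : n → K} (hx : x ≠ 0) {p : K[X]} (hp : aeval A p *ᵥ x = 0) : A.charpoly ∣ p := by
  by_contra h
  obtain ⟨a, b, hab⟩ := hA.coprime_iff_not_dvd.2 h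
  apply hx
  calc x = aeval A (a * A.charpoly + b * p) *ᵥ x := by rw [hab, map_one, one_mulVec]
    _ = 0 := by simp [aeval_self_charpoly, ← mulVec_mulVec, hp]

theorem eq_top_of_mulVec_mem_of_irreducible_charpoly {A : Matrix n n K}
    (hA : Irreducible A.charpoly) {T : Submodule K (n → K)} (hT : ∀ v ∈ T, A *ᵥ v ∈ T)
    (hT0 : T ≠ ⊥) : T = ⊤ := by
  obtain ⟨x, hxT, hx0⟩ := Submodule.exists_mem_ne_zero_of_ne_bot hT0
  let φ : degreeLT K (Fintype.card n) →ₗ[K] n → K :=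
    { toFun := fun p => aeval A (p : K[X]) *ᵥ x
      map_add' := by simp [add_mulVec]
      map_smul' := by simp [smul_mulVec] }
  have hφ : Function.Injective φ := by
    refine (injective_iff_map_eq_zero φ).2 fun p hp => ?_
    by_contra hp0
    have := degree_le_of_dvd (charpoly_dvd_of_aeval_mulVec_eq_zero hA hx0 hp)
      (by simpa using hp0)
    rw [charpoly_degree_eq_dim] at this
    exact (mem_degreeLT.1 p.2).not_ge this
  have hφT : LinearMap.range φ ≤ T := by
    rintro _ ⟨p, rfl⟩
    exact aeval_mulVec_mem hT p hxT
  refine Submodule.eq_top_of_finrank_eq (le_antisymm (Submodule.finrank_le T) ?_)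
  calc Module.finrank K (n → K) = Module.finrank K (degreeLT K (Fintype.card n)) := by
        simp [(degreeLTEquiv K _).finrank_eq]
    _ = Module.finrank K (LinearMap.range φ) := (LinearMap.finrank_range_of_inj hφ).symm
    _ ≤ Module.finrank K T := Submodule.finrank_mono hφT

theorem eq_top_of_map_mulVec_mem_of_irreducible_charpoly {F : Type*} [Field F] [Algebra K F]
    {A : Matrix n n K} (hA : Irreducible A.charpoly) {W : Submodule F (n → F)}
    (hW : ∀ v ∈ W, A.map (algebraMap K F) *ᵥ v ∈ W) {y : n → K} (hy0 : y ≠ 0)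
    (hy : algebraMap K F ∘ y ∈ W) : W = ⊤ := by
  let ι : (n → K) →ₗ[K] n → F := LinearMap.compLeft (Algebra.linearMap K F) n
  let T := (W.restrictScalars K).comap ι
  have hT : T = ⊤ := by
    refine eq_top_of_mulVec_mem_of_irreducible_charpoly hA (fun v hv => ?_) ?_
    · have : ι (A *ᵥ v) = A.map (algebraMap K F) *ᵥ ι v := funext (RingHom.map_mulVec _ A v)
      simpa [T, this] using hW _ hv
    · exact (Submodule.ne_bot_iff T).2 ⟨y, hy, hy0⟩
  rw [eq_top_iff, ← (Pi.basisFun F n).span_eq, Submodule.span_le]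
  rintro _ ⟨i, rfl⟩
  have : Pi.basisFun F n i = ι (Pi.single i 1) := by
    ext j
    simp [ι, Pi.single_apply]
  exact this ▸ (hT ▸ Submodule.mem_top : Pi.single i 1 ∈ T)

end Matrix

theorem AddMonoidHom.intCast_mulVec_mem_ker_compLeft {m n R M : Type*} [Fintype n] [Ring R]
    [AddCommGroup M] (f : R →+ M) (L : Matrix m n ℤ) {z : n → R} (hz : z ∈ (f.compLeft n).ker) :
    L.map ((↑) : ℤ → R) *ᵥ z ∈ (f.compLeft m).ker := by
  have hz' (j : n) : f (z j) = 0 := congrFun hz j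
  ext i
  simp [Matrix.mulVec, dotProduct, ← zsmul_eq_mul, hz']

theorem AddMonoidHom.dense_image_of_dense_sup_ker {G G' : Type*} [AddCommGroup G]
    [TopologicalSpace G] [AddGroup G'] [TopologicalSpace G'] {f : G →+ G'} (hf : Continuous f)
    (hsurj : Function.Surjective f) {V : AddSubgroup G}
    (hV : Dense ((V ⊔ f.ker : AddSubgroup G) : Set G)) :
    Dense (f '' V) := by
  have : f '' (V ⊔ f.ker : AddSubgroup G) = f '' V := by
    refine subset_antisymm ?_ (Set.image_mono fun v hv => AddSubgroup.mem_sup_left hv)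
    rintro _ ⟨_, hx, rfl⟩
    obtain ⟨v, hv, z, hz, rfl⟩ := AddSubgroup.mem_sup.1 hx
    exact ⟨v, hv, by simp [f.mem_ker.1 hz]⟩
  exact this ▸ hsurj.denseRange.dense_image hf hV

theorem AddSubgroup.eq_top_of_mulVec_mem_of_irreducible_charpoly {n : Type*} [Fintype n] [DecidableEq n]
    {L : Matrix n n ℤ} (hirr : Irreducible (L.map ((↑) : ℤ → ℚ)).charpoly)
    {H : AddSubgroup (n → ℝ)} (hH : IsClosed (H : Set (n → ℝ)))
    (hLH : ∀ x ∈ H, L.map ((↑) : ℤ → ℝ) *ᵥ x ∈ H) (hsingle : ∀ i, Pi.single i 1 ∈ H)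
    (hH0 : H.lineal ≠ ⊥) : H = ⊤ := by
  obtain ⟨c, hc0, hcH⟩ :=
    H.exists_intCombination_mem_lineal (Pi.basisFun ℝ n).span_eq hH (by simpa using hsingle) hH0
  have hHtop : H.lineal = ⊤ := by
    refine eq_top_of_map_mulVec_mem_of_irreducible_charpoly hirr (y := fun i => (c i : ℚ)) ?_
      (fun h => hc0 (funext fun i => by simpa using congrFun h i)) ?_
    · have : (L.map ((↑) : ℤ → ℚ)).map (algebraMap ℚ ℝ) = L.map ((↑) : ℤ → ℝ) := by ext; simp
      exact this ▸ H.lineal_mapsTo (f := (L.map ((↑) : ℤ → ℝ)).mulVecLin) hLH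
    · convert hcH
      ext j
      simp [Finset.sum_apply, Pi.single_apply]
  exact eq_top_iff.2 fun x _ => AddSubgroup.mem_of_mem_lineal (hHtop ▸ Submodule.mem_top)

theorem dense_proj_of_invariant_subspace_of_irreducible_general
    (d : ℕ) (L : Matrix (Fin d) (Fin d) ℤ)
    (hirr : Irreducible (L.map ((↑) : ℤ → ℚ)).charpoly)
    (V : Submodule ℝ (Fin d → ℝ))
    (hVinv : ∀ v ∈ V, (L.map ((↑) : ℤ → ℝ)).mulVec v ∈ V)
    (hV0 : V ≠ ⊥) :
    Dense ((fun x : Fin d → ℝ => fun i => (x i : AddCircle (1 : ℝ))) '' (V : Set (Fin d → ℝ))) := by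
  set A := L.map ((↑) : ℤ → ℝ)
  let π : (Fin d → ℝ) →+ (Fin d → AddCircle (1 : ℝ)) := (QuotientAddGroup.mk' _).compLeft (Fin d)
  let S := V.toAddSubgroup ⊔ π.ker
  have hSA : ∀ x ∈ S, A *ᵥ x ∈ S := fun x hx => by
    obtain ⟨v, hv, z, hz, rfl⟩ := AddSubgroup.mem_sup.1 hx
    exact mulVec_add A v z ▸ S.add_mem (AddSubgroup.mem_sup_left (hVinv v hv))
      (AddSubgroup.mem_sup_right (AddMonoidHom.intCast_mulVec_mem_ker_compLeft _ L hz))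
  have hVS : V ≤ S.topologicalClosure.lineal := fun v hv t =>
    S.le_topologicalClosure (AddSubgroup.mem_sup_left (V.smul_mem t hv))
  have hS : S.topologicalClosure = ⊤ := by
    refine AddSubgroup.eq_top_of_mulVec_mem_of_irreducible_charpoly hirr S.isClosed_topologicalClosure
      (fun x hx => map_mem_closure A.mulVecLin.continuous_of_finiteDimensional hx hSA)
      (fun i => S.le_topologicalClosure (AddSubgroup.mem_sup_right ?_))
      (ne_bot_of_le_ne_bot hV0 hVS)
    ext j
    by_cases j = i <;> simp [π, *]
  have hπ : Continuous π :=
    continuous_pi fun i => (AddCircle.continuous_mk' 1).comp (continuous_apply i)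
  exact AddMonoidHom.dense_image_of_dense_sup_ker (V := V.toAddSubgroup) hπ
    (QuotientAddGroup.mk'_surjective _).comp_left
    (dense_iff_closure_eq.2 (by rw [← S.topologicalClosure_coe, hS]; rfl))

/-- If `L ∈ SL(d,ℤ)` is irreducible (characteristic polynomial irreducible over `ℚ`) and
`V ⊆ ℝ^d` is a nonzero `L`-invariant real subspace, then the image of `V` under the
projection `ℝ^d → 𝕋^d = ℝ^d/ℤ^d` is dense in the torus. -/
theorem dense_proj_of_invariant_subspace_of_irreducible
    (d : ℕ) (L : Matrix (Fin d) (Fin d) ℤ) (hL : L.det = 1)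
    (hirr : Irreducible (L.map ((↑) : ℤ → ℚ)).charpoly)
    (V : Submodule ℝ (Fin d → ℝ))
    (hVinv : ∀ v ∈ V, (L.map ((↑) : ℤ → ℝ)).mulVec v ∈ V)
    (hV0 : V ≠ ⊥) :
    Dense ((fun x : Fin d → ℝ => fun i => (x i : AddCircle (1 : ℝ))) '' (V : Set (Fin d → ℝ))) :=
  dense_proj_of_invariant_subspace_of_irreducible_general d L hirr V hVinv hV0
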